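/- Let 𝒟₁ and 𝒟₂ be DAGs on [p] and let 𝓘 ⊆ [p] be a set of intervention targets. Then 𝒟₁ and 𝒟₂ are 𝓘-equivalent if and only if the augmented graphs 𝒟₁^𝓘 and 𝒟₂^𝓘 have the same skeleton and the same v-structures (i.e., are Markov equivalent). -/
import Mathlib


open Matrix

/-- A directed graph on `[p]` (given as its edge relation, `D a b` meaning `a → b`)
is acyclic if it has no directed cycles. -/
def IsAcyclic {p : ℕ} (D : Fin p → Fin p → Prop) : Prop :=
  ∀ i, ¬ Relation.TransGen D i i

/-- The graph `G(B)` underlying a connectivity matrix `B`: an edge `j → i` whenever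
`B i j ≠ 0`. -/
def graphOf {p : ℕ} (B : Matrix (Fin p) (Fin p) ℝ) : Fin p → Fin p → Prop :=
  fun j i => B i j ≠ 0

/-- A matrix `B` is compatible with a graph `D` (written `B ∼ D`) if `B i j ≠ 0`
implies that `j → i` is an edge of `D`. -/
def Compatible {p : ℕ} (B : Matrix (Fin p) (Fin p) ℝ) (D : Fin p → Fin p → Prop) : Prop :=
  ∀ i j, B i j ≠ 0 → D j i

/-- Two directed graphs have the same skeleton: the same adjacencies ignoring direction. -/
def SameSkeleton {V : Type*} (D D' : V → V → Prop) : Prop :=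
  ∀ a b, (D a b ∨ D b a) ↔ (D' a b ∨ D' b a)

/-- `(i, k, j)` is a v-structure: edges `i → k` and `j → k` with `i ≠ j` and `i, j`
non-adjacent. -/
def IsVStruct {V : Type*} (D : V → V → Prop) (i k j : V) : Prop :=
  D i k ∧ D j k ∧ i ≠ j ∧ ¬ D i j ∧ ¬ D j i

/-- Two directed graphs have the same v-structures. -/
def SameVStructs {V : Type*} (D D' : V → V → Prop) : Prop :=
  ∀ i k j, IsVStruct D i k j ↔ IsVStruct D' i k j

/-- `𝓘`-equivalence of two DAGs: same skeleton, same v-structures, and the same parents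
for every node in `𝓘`. -/
def IEquiv {p : ℕ} (I : Set (Fin p)) (D D' : Fin p → Fin p → Prop) : Prop :=
  SameSkeleton D D' ∧ SameVStructs D D' ∧ ∀ i ∈ I, ∀ j, D j i ↔ D' j i

/-- The augmented graph `𝒟^𝓘`: for each `i ∈ 𝓘` a new source node `ζ_i` is added,
together with the single edge `ζ_i → i`. -/
def augmentedGraph {p : ℕ} (D : Fin p → Fin p → Prop) (I : Set (Fin p)) :
    (Fin p ⊕ {i : Fin p // i ∈ I}) → (Fin p ⊕ {i : Fin p // i ∈ I}) → Prop
  | Sum.inl a, Sum.inl b => D a b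
  | Sum.inr i, Sum.inl k => k = i.val
  | _, _ => False

lemma irrefl_of_acyclic {p : ℕ} {D : Fin p → Fin p → Prop} (h : IsAcyclic D) :
    ∀ i, ¬ D i i := fun i hi => h i (Relation.TransGen.single hi)

lemma aug_vstruct_lll {p : ℕ} (D : Fin p → Fin p → Prop) (I : Set (Fin p)) (a k b : Fin p) :
    IsVStruct (augmentedGraph D I) (Sum.inl a) (Sum.inl k) (Sum.inl b) ↔ IsVStruct D a k b := by
  simp [IsVStruct, augmentedGraph]

lemma aug_vstruct_rll {p : ℕ} (D : Fin p → Fin p → Prop) (I : Set (Fin p))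
    (i : {i : Fin p // i ∈ I}) (k b : Fin p) :
    IsVStruct (augmentedGraph D I) (Sum.inr i) (Sum.inl k) (Sum.inl b) ↔
      (k = i.val ∧ D b k ∧ b ≠ i.val) := by
  simp only [IsVStruct, augmentedGraph]
  tauto

lemma aug_vstruct_llr {p : ℕ} (D : Fin p → Fin p → Prop) (I : Set (Fin p))
    (a k : Fin p) (j : {i : Fin p // i ∈ I}) :
    IsVStruct (augmentedGraph D I) (Sum.inl a) (Sum.inl k) (Sum.inr j) ↔
      (k = j.val ∧ D a k ∧ a ≠ j.val) := by
  simp only [IsVStruct, augmentedGraph]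
  tauto

lemma aug_vstruct_rlr {p : ℕ} (D : Fin p → Fin p → Prop) (I : Set (Fin p))
    (i : {i : Fin p // i ∈ I}) (k : Fin p) (j : {i : Fin p // i ∈ I}) :
    ¬ IsVStruct (augmentedGraph D I) (Sum.inr i) (Sum.inl k) (Sum.inr j) := by
  rintro ⟨h1, h2, h3, -⟩
  simp only [augmentedGraph] at h1 h2
  exact h3 (by rw [Sum.inr.injEq]; exact Subtype.ext (h1 ▸ h2))

lemma aug_vstruct_kr {p : ℕ} (D : Fin p → Fin p → Prop) (I : Set (Fin p))
    (x y : Fin p ⊕ {i : Fin p // i ∈ I}) (j : {i : Fin p // i ∈ I}) :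
    ¬ IsVStruct (augmentedGraph D I) x (Sum.inr j) y := by
  rintro ⟨h1, -⟩
  cases x <;> exact h1

/-- Two DAGs are `𝓘`-equivalent if and only if their augmented graphs `𝒟₁^𝓘` and
`𝒟₂^𝓘` have the same skeleton and the same v-structures (i.e., are Markov equivalent,
by the Verma–Pearl characterization). -/
theorem iequiv_iff_augmented_markov_equivalent
    {p : ℕ} (D1 D2 : Fin p → Fin p → Prop)
    (hD1 : IsAcyclic D1) (hD2 : IsAcyclic D2) (I : Set (Fin p)) :
    IEquiv I D1 D2 ↔
      (SameSkeleton (augmentedGraph D1 I) (augmentedGraph D2 I) ∧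
        SameVStructs (augmentedGraph D1 I) (augmentedGraph D2 I)) := by
  constructor
  · rintro ⟨hsk, hvs, hpa⟩
    constructor
    · rintro (a|a) (b|b) <;> simp [augmentedGraph]
      exact hsk a b
    · rintro (x|x) (k|k) (y|y)
      · rw [aug_vstruct_lll, aug_vstruct_lll]; exact hvs x k y
      · rw [aug_vstruct_llr, aug_vstruct_llr]
        constructor
        · rintro ⟨rfl, h2, h3⟩; exact ⟨rfl, (hpa y.val y.property x).mp h2, h3⟩
        · rintro ⟨rfl, h2, h3⟩; exact ⟨rfl, (hpa y.val y.property x).mpr h2, h3⟩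
      · simp [aug_vstruct_kr]
      · simp [aug_vstruct_kr]
      · rw [aug_vstruct_rll, aug_vstruct_rll]
        constructor
        · rintro ⟨rfl, h2, h3⟩; exact ⟨rfl, (hpa x.val x.property y).mp h2, h3⟩
        · rintro ⟨rfl, h2, h3⟩; exact ⟨rfl, (hpa x.val x.property y).mpr h2, h3⟩
      · simp [aug_vstruct_rlr]
      · simp [aug_vstruct_kr]
      · simp [aug_vstruct_kr]
  · rintro ⟨hsk, hvs⟩
    refine ⟨fun a b => hsk (Sum.inl a) (Sum.inl b), fun a k b => ?_, fun i hi j => ?_⟩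
    · rw [← aug_vstruct_lll D1 I, ← aug_vstruct_lll D2 I]
      exact hvs _ _ _
    · have h := hvs (Sum.inr ⟨i, hi⟩) (Sum.inl i) (Sum.inl j)
      rw [aug_vstruct_rll, aug_vstruct_rll] at h
      by_cases hji : j = i
      · subst hji
        simp [irrefl_of_acyclic hD1 j, irrefl_of_acyclic hD2 j]
      · constructor <;> intro hd
        · exact (h.mp ⟨rfl, hd, hji⟩).2.1
        · exact (h.mpr ⟨rfl, hd, hji⟩).2.1
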